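/- Let X ~ N(θ,1) and R_s(θ;λ) = E_θ(s_λ(X) - θ)² for the soft threshold function s_λ. Then for all θ, λ > 0: (∂/∂θ)² R_s(θ;λ) = 2[∫_{-λ-θ}^{λ-θ} φ(u) du + θφ(λ+θ) - θφ(λ-θ)] ≤ 2; consequently R_s(θ;λ) ≤ R_s(0;λ) + θ². -/

import Mathlib

open MeasureTheory Real intervalIntegral

open Filter Set

noncomputable def gaussPDF (x : ℝ) : ℝ := (Real.sqrt (2 * Real.pi))⁻¹ * Real.exp (-x ^ 2 / 2)

lemma gaussPDF_eq (x : ℝ) : gaussPDF x = (Real.sqrt (2 * Real.pi))⁻¹ * Real.exp (-(1/2) * x ^ 2) := by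
  rw [gaussPDF]; ring_nf

lemma gaussPDF_nonneg (x : ℝ) : 0 ≤ gaussPDF x := by
  unfold gaussPDF
  positivity

lemma gaussPDF_neg (x : ℝ) : gaussPDF (-x) = gaussPDF x := by
  simp [gaussPDF]

lemma continuous_gaussPDF : Continuous gaussPDF := by
  unfold gaussPDF; fun_prop

lemma integrable_gaussPDF : Integrable gaussPDF := by
  simp only [funext gaussPDF_eq]
  exact (integrable_exp_neg_mul_sq (by norm_num : (0:ℝ) < 1/2)).const_mul _

lemma integral_gaussPDF : ∫ x, gaussPDF x = 1 := by
  simp only [funext gaussPDF_eq]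
  rw [MeasureTheory.integral_const_mul, integral_gaussian]
  have h2 : π / (1/2) = 2 * π := by ring
  rw [h2, inv_mul_cancel₀]
  positivity

lemma integrable_mul_gaussPDF : Integrable (fun x => x * gaussPDF x) := by
  simp only [gaussPDF_eq]
  have := (integrable_mul_exp_neg_mul_sq (by norm_num : (0:ℝ) < 1/2)).const_mul (Real.sqrt (2 * Real.pi))⁻¹
  convert this using 2 with x
  ring

lemma integrable_sq_mul_gaussPDF : Integrable (fun x => x ^ 2 * gaussPDF x) := by
  simp only [gaussPDF_eq]
  have h := integrable_rpow_mul_exp_neg_mul_sq (by norm_num : (0:ℝ) < 1/2) (by norm_num : (-1:ℝ) < 2)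
  have h2 : Integrable (fun x : ℝ => x ^ 2 * Real.exp (-(1/2) * x ^ 2)) := by
    convert h using 2 with x
    rw [show ((2:ℝ) = ((2:ℕ) : ℝ)) by norm_num, Real.rpow_natCast]
  have := h2.const_mul (Real.sqrt (2 * Real.pi))⁻¹
  convert this using 2 with x
  ring

lemma hasDerivAt_gaussPDF (x : ℝ) : HasDerivAt gaussPDF (-x * gaussPDF x) x := by
  have h1 : HasDerivAt (fun y : ℝ => -y ^ 2 / 2) (-x) x := by
    have := ((hasDerivAt_pow 2 x).neg).div_const 2
    refine this.congr_deriv ?_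
    push_cast
    ring
  have := (h1.exp).const_mul (Real.sqrt (2 * Real.pi))⁻¹
  refine this.congr_deriv ?_
  rw [gaussPDF]; ring

noncomputable def Phi (x : ℝ) : ℝ := ∫ u in Iic x, gaussPDF u

lemma Phi_eq (x : ℝ) : Phi x = Phi 0 + ∫ u in (0:ℝ)..x, gaussPDF u := by
  rw [← integral_Iic_sub_Iic integrable_gaussPDF.integrableOn integrable_gaussPDF.integrableOn]
  unfold Phi; ring

lemma hasDerivAt_Phi (x : ℝ) : HasDerivAt Phi (gaussPDF x) x := by
  have h := ((continuous_gaussPDF.integral_hasStrictDerivAt 0 x).hasDerivAt).const_add (Phi 0)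
  have : (fun u => Phi 0 + ∫ t in (0:ℝ)..u, gaussPDF t) = Phi := by
    funext u; rw [Phi_eq u]
  rwa [this] at h

lemma Phi_nonneg (x : ℝ) : 0 ≤ Phi x :=
  setIntegral_nonneg measurableSet_Iic (fun u _ => gaussPDF_nonneg u)

lemma Phi_le_one (x : ℝ) : Phi x ≤ 1 := by
  rw [← integral_gaussPDF]
  exact setIntegral_le_integral integrable_gaussPDF (Eventually.of_forall gaussPDF_nonneg)

lemma Phi_mono {a b : ℝ} (h : a ≤ b) : Phi a ≤ Phi b := by
  have := integral_Iic_sub_Iic (μ := volume) (f := gaussPDF) (a := a) (b := b)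
    integrable_gaussPDF.integrableOn integrable_gaussPDF.integrableOn
  have h2 : 0 ≤ ∫ u in a..b, gaussPDF u :=
    intervalIntegral.integral_nonneg h (fun u _ => gaussPDF_nonneg u)
  have : Phi b - Phi a = ∫ u in a..b, gaussPDF u := this
  linarith

lemma integral_Ioi_gaussPDF (a : ℝ) : ∫ u in Ioi a, gaussPDF u = 1 - Phi a := by
  have := integral_Iic_add_Ioi (μ := volume) (b := a)
    integrable_gaussPDF.integrableOn integrable_gaussPDF.integrableOn
  rw [integral_gaussPDF] at this
  unfold Phi; linarith [this]

lemma Phi_neg_eq (x : ℝ) : Phi (-x) = 1 - Phi x := by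
  have h : (∫ u in Iic (-x), gaussPDF u) = ∫ u in Ioi x, gaussPDF u := by
    rw [← integral_comp_neg_Ioi]
    simp only [gaussPDF_neg]
  rw [Phi, h, integral_Ioi_gaussPDF]

lemma intervalIntegral_gaussPDF (a b : ℝ) : (∫ u in a..b, gaussPDF u) = Phi b - Phi a :=
  (integral_Iic_sub_Iic integrable_gaussPDF.integrableOn integrable_gaussPDF.integrableOn).symm

-- decay lemmas
lemma tendsto_gaussPDF_atTop : Tendsto gaussPDF atTop (nhds 0) := by
  have hb : Tendsto (fun x : ℝ => (Real.sqrt (2 * Real.pi))⁻¹ * Real.exp (-x)) atTop (nhds 0) := by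
    simpa using (Real.tendsto_exp_neg_atTop_nhds_zero).const_mul (Real.sqrt (2 * Real.pi))⁻¹
  apply squeeze_zero_norm' _ hb
  filter_upwards [eventually_ge_atTop (2:ℝ)] with x hx
  rw [Real.norm_eq_abs, abs_of_nonneg (gaussPDF_nonneg x), gaussPDF]
  apply mul_le_mul_of_nonneg_left _ (by positivity)
  apply Real.exp_le_exp.mpr
  nlinarith

lemma tendsto_mul_gaussPDF_atTop : Tendsto (fun x => x * gaussPDF x) atTop (nhds 0) := by
  have hb : Tendsto (fun x : ℝ => (Real.sqrt (2 * Real.pi))⁻¹ * (x * Real.exp (-x))) atTop (nhds 0) := by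
    simpa using (tendsto_pow_mul_exp_neg_atTop_nhds_zero 1).const_mul (Real.sqrt (2 * Real.pi))⁻¹
  apply squeeze_zero_norm' _ hb
  filter_upwards [eventually_ge_atTop (2:ℝ)] with x hx
  rw [Real.norm_eq_abs, abs_of_nonneg (mul_nonneg (by linarith) (gaussPDF_nonneg x)), gaussPDF]
  have hexp : Real.exp (-x ^ 2 / 2) ≤ Real.exp (-x) := Real.exp_le_exp.mpr (by nlinarith)
  have h0 : (0:ℝ) ≤ (Real.sqrt (2 * Real.pi))⁻¹ := by positivity
  calc x * ((Real.sqrt (2 * Real.pi))⁻¹ * Real.exp (-x ^ 2 / 2))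
      = (Real.sqrt (2 * Real.pi))⁻¹ * (x * Real.exp (-x ^ 2 / 2)) := by ring
    _ ≤ (Real.sqrt (2 * Real.pi))⁻¹ * (x * Real.exp (-x)) :=
        mul_le_mul_of_nonneg_left (mul_le_mul_of_nonneg_left hexp (by linarith)) h0

lemma integral_Ioi_mul_gaussPDF (a : ℝ) : ∫ u in Ioi a, u * gaussPDF u = gaussPDF a := by
  have key : ∀ b : ℝ, (∫ u in a..b, u * gaussPDF u) = gaussPDF a - gaussPDF b := by
    intro b
    have : ∀ u ∈ Set.uIcc a b, HasDerivAt (fun y => -gaussPDF y) (u * gaussPDF u) u := by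
      intro u _
      exact (hasDerivAt_gaussPDF u).neg.congr_deriv (by ring)
    rw [intervalIntegral.integral_eq_sub_of_hasDerivAt this
      ((continuous_id.mul continuous_gaussPDF).intervalIntegrable a b)]
    ring
  have h1 : Tendsto (fun b => ∫ u in a..b, u * gaussPDF u) atTop
      (nhds (∫ u in Ioi a, u * gaussPDF u)) :=
    intervalIntegral_tendsto_integral_Ioi a integrable_mul_gaussPDF.integrableOn tendsto_id
  have h2 : Tendsto (fun b => ∫ u in a..b, u * gaussPDF u) atTop (nhds (gaussPDF a - 0)) := by
    simp only [key]
    exact tendsto_const_nhds.sub tendsto_gaussPDF_atTop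
  rw [tendsto_nhds_unique h1 h2]; ring

lemma integral_Ioi_sq_sub_one_mul_gaussPDF (a : ℝ) :
    ∫ u in Ioi a, (u ^ 2 - 1) * gaussPDF u = a * gaussPDF a := by
  have key : ∀ b : ℝ, (∫ u in a..b, (u ^ 2 - 1) * gaussPDF u)
      = a * gaussPDF a - b * gaussPDF b := by
    intro b
    have : ∀ u ∈ Set.uIcc a b, HasDerivAt (fun y => -(y * gaussPDF y)) ((u ^ 2 - 1) * gaussPDF u) u := by
      intro u _
      have := ((hasDerivAt_id u).mul (hasDerivAt_gaussPDF u)).neg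
      refine this.congr_deriv ?_
      simp only [id_eq]
      ring
    rw [intervalIntegral.integral_eq_sub_of_hasDerivAt this
      (((continuous_pow 2).sub continuous_const).mul continuous_gaussPDF |>.intervalIntegrable a b)]
    ring
  have hi : Integrable (fun u : ℝ => (u ^ 2 - 1) * gaussPDF u) := by
    have := integrable_sq_mul_gaussPDF.sub integrable_gaussPDF
    apply this.congr
    filter_upwards with u
    simp only [Pi.sub_apply]
    ring
  have h1 : Tendsto (fun b => ∫ u in a..b, (u ^ 2 - 1) * gaussPDF u) atTop
      (nhds (∫ u in Ioi a, (u ^ 2 - 1) * gaussPDF u)) :=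
    intervalIntegral_tendsto_integral_Ioi a hi.integrableOn tendsto_id
  have h2 : Tendsto (fun b => ∫ u in a..b, (u ^ 2 - 1) * gaussPDF u) atTop
      (nhds (a * gaussPDF a - 0)) := by
    simp only [key]
    exact tendsto_const_nhds.sub tendsto_mul_gaussPDF_atTop
  rw [tendsto_nhds_unique h1 h2]; ring

lemma integrable_shift_sq_mul_gaussPDF (lam : ℝ) :
    Integrable (fun u : ℝ => (u - lam) ^ 2 * gaussPDF u) := by
  have := (integrable_sq_mul_gaussPDF.sub ((integrable_mul_gaussPDF.const_mul (2 * lam)))).add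
    (integrable_gaussPDF.const_mul (lam ^ 2))
  apply this.congr
  filter_upwards with u
  simp only [Pi.sub_apply, Pi.add_apply]
  ring

lemma integrable_sq_sub_one_mul_gaussPDF : Integrable (fun u : ℝ => (u ^ 2 - 1) * gaussPDF u) := by
  have := integrable_sq_mul_gaussPDF.sub integrable_gaussPDF
  apply this.congr
  filter_upwards with u
  simp only [Pi.sub_apply]
  ring

lemma integral_Ioi_tail (lam a : ℝ) :
    ∫ u in Ioi a, (u - lam) ^ 2 * gaussPDF u
      = (1 + lam ^ 2) * (1 - Phi a) + (a - 2 * lam) * gaussPDF a := by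
  have heq : ∀ u ∈ Ioi a, (u - lam) ^ 2 * gaussPDF u
      = ((u ^ 2 - 1) * gaussPDF u - 2 * lam * (u * gaussPDF u)) + (1 + lam ^ 2) * gaussPDF u :=
    fun u _ => by ring
  rw [setIntegral_congr_fun measurableSet_Ioi heq]
  have i1 : IntegrableOn (fun u : ℝ => (u ^ 2 - 1) * gaussPDF u) (Ioi a) :=
    integrable_sq_sub_one_mul_gaussPDF.integrableOn
  have i2 : IntegrableOn (fun u : ℝ => 2 * lam * (u * gaussPDF u)) (Ioi a) :=
    (integrable_mul_gaussPDF.const_mul (2 * lam)).integrableOn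
  have i3 : IntegrableOn (fun u : ℝ => (1 + lam ^ 2) * gaussPDF u) (Ioi a) :=
    (integrable_gaussPDF.const_mul (1 + lam ^ 2)).integrableOn
  have i12 : IntegrableOn
      (fun u : ℝ => (u ^ 2 - 1) * gaussPDF u - 2 * lam * (u * gaussPDF u)) (Ioi a) := by
    exact i1.sub i2
  rw [integral_add i12 i3, integral_sub i1 i2, MeasureTheory.integral_const_mul, MeasureTheory.integral_const_mul,
    integral_Ioi_mul_gaussPDF, integral_Ioi_sq_sub_one_mul_gaussPDF, integral_Ioi_gaussPDF]
  ring

lemma integral_Iic_tail (lam a : ℝ) :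
    ∫ u in Iic a, (u + lam) ^ 2 * gaussPDF u
      = (1 + lam ^ 2) * Phi a - (a + 2 * lam) * gaussPDF a := by
  have h : (∫ x in Ioi (-a), (x - lam) ^ 2 * gaussPDF x)
      = ∫ u in Iic a, (u + lam) ^ 2 * gaussPDF u := by
    calc ∫ x in Ioi (-a), (x - lam) ^ 2 * gaussPDF x
        = ∫ x in Ioi (-a), (fun u => (u + lam) ^ 2 * gaussPDF u) (-x) := by
          apply setIntegral_congr_fun measurableSet_Ioi
          intro x _
          simp only
          rw [gaussPDF_neg]
          ring
      _ = ∫ u in Iic (-(-a)), (u + lam) ^ 2 * gaussPDF u := by exact integral_comp_neg_Ioi (-a) (fun u => (u + lam) ^ 2 * gaussPDF u)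
      _ = ∫ u in Iic a, (u + lam) ^ 2 * gaussPDF u := by rw [neg_neg]
  rw [← h, integral_Ioi_tail, Phi_neg_eq, gaussPDF_neg]
  ring

noncomputable def softThresh (lam x : ℝ) : ℝ := Real.sign x * max (|x| - lam) 0

/-- Risk of the soft threshold estimator at mean `θ`, unit variance. -/
noncomputable def softRisk (lam θ : ℝ) : ℝ :=
  ∫ x, (softThresh lam x - θ) ^ 2 * gaussPDF (x - θ)

lemma softThresh_of_ge {lam x : ℝ} (hlam : 0 < lam) (h : lam ≤ x) :
    softThresh lam x = x - lam := by
  rw [softThresh, Real.sign_of_pos (by linarith), abs_of_pos (by linarith),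
    max_eq_left (by linarith)]
  ring

lemma softThresh_of_le {lam x : ℝ} (hlam : 0 < lam) (h : x ≤ -lam) :
    softThresh lam x = x + lam := by
  rw [softThresh, Real.sign_of_neg (by linarith), abs_of_neg (by linarith),
    max_eq_left (by linarith)]
  ring

lemma softThresh_of_abs_le {lam x : ℝ} (h : |x| ≤ lam) : softThresh lam x = 0 := by
  rw [softThresh, max_eq_right (by linarith), mul_zero]

noncomputable def CF (lam t : ℝ) : ℝ :=
  t ^ 2 * (Phi (lam - t) + Phi (lam + t) - 1)
    + (1 + lam ^ 2) * (2 - Phi (lam - t) - Phi (lam + t))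
    - (lam + t) * gaussPDF (lam - t) - (lam - t) * gaussPDF (lam + t)

lemma softRisk_eq_CF {lam : ℝ} (hlam : 0 < lam) (t : ℝ) : softRisk lam t = CF lam t := by
  have hdc : -lam - t ≤ lam - t := by linarith
  set F : ℝ → ℝ := fun u => (softThresh lam (u + t) - t) ^ 2 * gaussPDF u with hF
  have h0 : softRisk lam t = ∫ u, F u := by
    rw [softRisk, ← integral_sub_right_eq_self F t]
    congr 1
    funext x
    simp only [hF, sub_add_cancel]
  -- region descriptions
  have hIic : EqOn F (fun u => (u + lam) ^ 2 * gaussPDF u) (Iic (-lam - t)) := by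
    intro u hu
    simp only [hF]
    rw [softThresh_of_le hlam (by simp only [mem_Iic] at hu; linarith)]
    ring_nf
  have hmid : EqOn F (fun u => t ^ 2 * gaussPDF u) (Ioc (-lam - t) (lam - t)) := by
    intro u hu
    simp only [mem_Ioc] at hu
    simp only [hF]
    rw [softThresh_of_abs_le (abs_le.mpr ⟨by linarith, by linarith⟩)]
    ring_nf
  have hIoi : EqOn F (fun u => (u - lam) ^ 2 * gaussPDF u) (Ioi (lam - t)) := by
    intro u hu
    simp only [mem_Ioi] at hu
    simp only [hF]
    rw [softThresh_of_ge hlam (by linarith)]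
    ring_nf
  -- integrability
  have jIic : IntegrableOn (fun u : ℝ => (u + lam) ^ 2 * gaussPDF u) (Iic (-lam - t)) := by
    have := integrable_shift_sq_mul_gaussPDF (-lam)
    exact (this.congr (Eventually.of_forall fun u => by ring)).integrableOn
  have jmid : IntegrableOn (fun u : ℝ => t ^ 2 * gaussPDF u) (Ioc (-lam - t) (lam - t)) :=
    (integrable_gaussPDF.const_mul _).integrableOn
  have jIoi : IntegrableOn (fun u : ℝ => (u - lam) ^ 2 * gaussPDF u) (Ioi (lam - t)) :=
    (integrable_shift_sq_mul_gaussPDF lam).integrableOn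
  have iIic : IntegrableOn F (Iic (-lam - t)) :=
    jIic.congr_fun (fun u hu => (hIic hu).symm) measurableSet_Iic
  have imid : IntegrableOn F (Ioc (-lam - t) (lam - t)) :=
    jmid.congr_fun (fun u hu => (hmid hu).symm) measurableSet_Ioc
  have iIoi : IntegrableOn F (Ioi (lam - t)) :=
    jIoi.congr_fun (fun u hu => (hIoi hu).symm) measurableSet_Ioi
  have iIoiD : IntegrableOn F (Ioi (-lam - t)) := by
    rw [← Ioc_union_Ioi_eq_Ioi hdc]
    exact imid.union iIoi
  -- split the integral
  have hsplit : (∫ u, F u) = (∫ u in Iic (-lam - t), F u) + (∫ u in Ioc (-lam - t) (lam - t), F u)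
      + ∫ u in Ioi (lam - t), F u := by
    rw [← integral_Iic_add_Ioi iIic iIoiD, ← Ioc_union_Ioi_eq_Ioi hdc,
      setIntegral_union Ioc_disjoint_Ioi_same measurableSet_Ioi imid iIoi]
    ring
  -- evaluate the three pieces
  have e1 : (∫ u in Iic (-lam - t), F u)
      = (1 + lam ^ 2) * Phi (-lam - t) - ((-lam - t) + 2 * lam) * gaussPDF (-lam - t) := by
    rw [setIntegral_congr_fun measurableSet_Iic hIic, integral_Iic_tail]
  have e2 : (∫ u in Ioc (-lam - t) (lam - t), F u)
      = t ^ 2 * (Phi (lam - t) - Phi (-lam - t)) := by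
    rw [setIntegral_congr_fun measurableSet_Ioc hmid, MeasureTheory.integral_const_mul,
      ← intervalIntegral.integral_of_le hdc, intervalIntegral_gaussPDF]
  have e3 : (∫ u in Ioi (lam - t), F u)
      = (1 + lam ^ 2) * (1 - Phi (lam - t)) + ((lam - t) - 2 * lam) * gaussPDF (lam - t) := by
    rw [setIntegral_congr_fun measurableSet_Ioi hIoi, integral_Ioi_tail]
  have hPhid : Phi (-lam - t) = 1 - Phi (lam + t) := by
    rw [show -lam - t = -(lam + t) by ring, Phi_neg_eq]
  have hgd : gaussPDF (-lam - t) = gaussPDF (lam + t) := by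
    rw [show -lam - t = -(lam + t) by ring, gaussPDF_neg]
  rw [h0, hsplit, e1, e2, e3, hPhid, hgd, CF]
  ring

-- derivative building blocks
lemma hasDerivAt_Phi_sub (lam t : ℝ) :
    HasDerivAt (fun s : ℝ => Phi (lam - s)) (-gaussPDF (lam - t)) t := by
  have hi : HasDerivAt (fun s : ℝ => lam - s) (-1) t := by
    exact (hasDerivAt_id t).const_sub lam
  have := (hasDerivAt_Phi (lam - t)).comp t hi
  exact this.congr_deriv (by ring)

lemma hasDerivAt_Phi_add (lam t : ℝ) :
    HasDerivAt (fun s : ℝ => Phi (lam + s)) (gaussPDF (lam + t)) t := by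
  have hi : HasDerivAt (fun s : ℝ => lam + s) 1 t := by
    exact (hasDerivAt_id t).const_add lam
  have := (hasDerivAt_Phi (lam + t)).comp t hi
  exact this.congr_deriv (by ring)

lemma hasDerivAt_gauss_sub (lam t : ℝ) :
    HasDerivAt (fun s : ℝ => gaussPDF (lam - s)) ((lam - t) * gaussPDF (lam - t)) t := by
  have hi : HasDerivAt (fun s : ℝ => lam - s) (-1) t := by
    exact (hasDerivAt_id t).const_sub lam
  have := (hasDerivAt_gaussPDF (lam - t)).comp t hi
  have h2 : -(lam - t) * gaussPDF (lam - t) * (-1) = (lam - t) * gaussPDF (lam - t) := by ring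
  rw [← h2]
  exact this

lemma hasDerivAt_gauss_add (lam t : ℝ) :
    HasDerivAt (fun s : ℝ => gaussPDF (lam + s)) (-(lam + t) * gaussPDF (lam + t)) t := by
  have hi : HasDerivAt (fun s : ℝ => lam + s) 1 t := by
    exact (hasDerivAt_id t).const_add lam
  have := (hasDerivAt_gaussPDF (lam + t)).comp t hi
  exact this.congr_deriv (by ring)

noncomputable def CF1 (lam t : ℝ) : ℝ := 2 * t * (Phi (lam - t) + Phi (lam + t) - 1)

lemma hasDerivAt_CF (lam t : ℝ) : HasDerivAt (CF lam) (CF1 lam t) t := by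
  have h1 := hasDerivAt_Phi_sub lam t
  have h2 := hasDerivAt_Phi_add lam t
  have h3 := hasDerivAt_gauss_sub lam t
  have h4 := hasDerivAt_gauss_add lam t
  have H := ((((hasDerivAt_pow 2 t).mul ((h1.add h2).sub_const 1)).add
      ((((hasDerivAt_const t (2:ℝ)).sub h1).sub h2).const_mul (1 + lam ^ 2))).sub
      (((hasDerivAt_const t lam).add (hasDerivAt_id t)).mul h3)).sub
      (((hasDerivAt_const t lam).sub (hasDerivAt_id t)).mul h4)
  have hfun : (fun s : ℝ => s ^ 2 * (Phi (lam - s) + Phi (lam + s) - 1)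
      + (1 + lam ^ 2) * (2 - Phi (lam - s) - Phi (lam + s))
      - (lam + s) * gaussPDF (lam - s) - (lam - s) * gaussPDF (lam + s)) = CF lam := by
    funext s; rw [CF]
  try simp only [id_eq] at H
  rw [← hfun]
  refine H.congr_deriv ?_
  simp only [CF1, id_eq, Pi.add_apply, Pi.sub_apply]
  push_cast
  ring

lemma hasDerivAt_CF1 (lam t : ℝ) : HasDerivAt (CF1 lam)
    (2 * ((Phi (lam - t) + Phi (lam + t) - 1)
      + t * (gaussPDF (lam + t) - gaussPDF (lam - t)))) t := by
  have h1 := hasDerivAt_Phi_sub lam t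
  have h2 := hasDerivAt_Phi_add lam t
  have H := (((hasDerivAt_id t).const_mul 2).mul ((h1.add h2).sub_const 1))
  have hfun : (fun s : ℝ => 2 * s * (Phi (lam - s) + Phi (lam + s) - 1)) = CF1 lam := by
    funext s; rw [CF1]
  try simp only [id_eq] at H
  rw [← hfun]
  refine H.congr_deriv ?_
  simp only [Pi.add_apply]
  ring

-- bounds
lemma gauss_anti {a b : ℝ} (h : a ^ 2 ≤ b ^ 2) : gaussPDF b ≤ gaussPDF a := by
  unfold gaussPDF
  apply mul_le_mul_of_nonneg_left _ (by positivity)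
  apply Real.exp_le_exp.mpr
  linarith

lemma Q_nonneg {lam : ℝ} (hlam : 0 ≤ lam) (t : ℝ) :
    0 ≤ Phi (lam - t) + Phi (lam + t) - 1 := by
  have h := Phi_mono (show -(lam - t) ≤ lam + t by linarith)
  rw [Phi_neg_eq] at h
  linarith

lemma Q_le_one (lam t : ℝ) : Phi (lam - t) + Phi (lam + t) - 1 ≤ 1 := by
  have := Phi_le_one (lam - t)
  have := Phi_le_one (lam + t)
  linarith

lemma gdiff_nonpos {lam : ℝ} (hlam : 0 ≤ lam) (t : ℝ) :
    t * (gaussPDF (lam + t) - gaussPDF (lam - t)) ≤ 0 := by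
  rcases le_total 0 t with ht | ht
  · have h : gaussPDF (lam + t) ≤ gaussPDF (lam - t) := gauss_anti (by nlinarith)
    exact mul_nonpos_of_nonneg_of_nonpos ht (by linarith)
  · have h : gaussPDF (lam - t) ≤ gaussPDF (lam + t) := gauss_anti (by nlinarith)
    exact mul_nonpos_of_nonpos_of_nonneg ht (by linarith)

theorem stmt_9 (lam θ : ℝ) (hlam : 0 < lam) :
    deriv (deriv (fun t => softRisk lam t)) θ =
        2 * ((∫ u in (-lam - θ)..(lam - θ), gaussPDF u) +
          θ * gaussPDF (lam + θ) - θ * gaussPDF (lam - θ)) ∧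
    deriv (deriv (fun t => softRisk lam t)) θ ≤ 2 ∧
    softRisk lam θ ≤ softRisk lam 0 + θ ^ 2 := by
  have hfun : (fun t => softRisk lam t) = CF lam := funext (softRisk_eq_CF hlam)
  have hd1 : deriv (fun t => softRisk lam t) = CF1 lam := by
    rw [hfun]; funext s; exact (hasDerivAt_CF lam s).deriv
  have hd2 : deriv (deriv (fun t => softRisk lam t)) θ
      = 2 * ((Phi (lam - θ) + Phi (lam + θ) - 1)
        + θ * (gaussPDF (lam + θ) - gaussPDF (lam - θ))) := by
    rw [hd1]; exact (hasDerivAt_CF1 lam θ).deriv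
  have hint : (∫ u in (-lam - θ)..(lam - θ), gaussPDF u)
      = Phi (lam - θ) + Phi (lam + θ) - 1 := by
    rw [intervalIntegral_gaussPDF, show -lam - θ = -(lam + θ) by ring, Phi_neg_eq]
    ring
  refine ⟨?_, ?_, ?_⟩
  · rw [hd2, hint]; ring
  · rw [hd2]
    have := Q_le_one lam θ
    have := gdiff_nonpos hlam.le θ
    linarith
  · -- monotonicity argument for g(t) = CF lam t - t^2
    set g : ℝ → ℝ := fun s => CF lam s - s ^ 2 with hg
    have hg' : ∀ x : ℝ, HasDerivAt g (CF1 lam x - 2 * x) x := by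
      intro x
      exact (hasDerivAt_CF lam x).sub (by simpa using hasDerivAt_pow 2 x)
    have hder : ∀ x : ℝ, deriv g x = CF1 lam x - 2 * x := fun x => (hg' x).deriv
    have hcont : Continuous g := by
      have : Differentiable ℝ g := fun x => (hg' x).differentiableAt
      exact this.continuous
    have key : g θ ≤ g 0 := by
      rcases le_total 0 θ with ht | ht
      · have hanti : AntitoneOn g (Icc 0 θ) := by
          apply antitoneOn_of_deriv_nonpos (convex_Icc 0 θ) hcont.continuousOn
          · intro x _
            exact (hg' x).differentiableAt.differentiableWithinAt
          · intro x hx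
            rw [interior_Icc, mem_Ioo] at hx
            rw [hder, CF1]
            have h1 := Q_le_one lam x
            nlinarith [hx.1]
        exact hanti (left_mem_Icc.mpr ht) (right_mem_Icc.mpr ht) ht
      · have hmono : MonotoneOn g (Icc θ 0) := by
          apply monotoneOn_of_deriv_nonneg (convex_Icc θ 0) hcont.continuousOn
          · intro x _
            exact (hg' x).differentiableAt.differentiableWithinAt
          · intro x hx
            rw [interior_Icc, mem_Ioo] at hx
            rw [hder, CF1]
            have h1 := Q_le_one lam x
            nlinarith [hx.2]
        exact hmono (left_mem_Icc.mpr ht) (right_mem_Icc.mpr ht) ht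
    rw [softRisk_eq_CF hlam, softRisk_eq_CF hlam]
    simp only [hg] at key
    nlinarith [key]
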